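/- arXiv:1011.5281 — 2 statements merged into one kernel-verified Lean document; each statement's English description precedes it below -/
import Mathlib

section
/- Let X be a normed space, p > 1, and G : X → ℝ a C¹ functional such that ⟨G'(u) - G'(v), u - v⟩ ≥ (‖u‖^{p-1} - ‖v‖^{p-1})(‖u‖ - ‖v‖) for all u, v ∈ X. If (uₙ) converges weakly to u in X and ⟨G'(uₙ), uₙ - u⟩ → 0, then ‖uₙ‖ → ‖u‖. -/
/-!
Monotonicity of `G'` gives
`0 ≤ (‖uₙ‖^{p-1} - ‖l‖^{p-1})(‖uₙ‖ - ‖l‖) ≤ ⟨G'(uₙ) - G'(l), uₙ - l⟩`, and the right-hand side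
tends to `0` because `⟨G'(l), uₙ - l⟩ → 0` by weak convergence.
For a strictly increasing `f`, `(f t - f a)(t - a)` is bounded away from `0` once `t` is bounded
away from `a`, so `‖uₙ‖ → ‖l‖`.
-/

open Filter Set Topology

section StrictMonoOn

variable {ι : Type*} {l : Filter ι} {f : ℝ → ℝ} {s : Set ℝ} {t : ι → ℝ} {a : ℝ}

lemma StrictMonoOn.eventually_lt_of_tendsto_sub_mul_sub (hs : s.OrdConnected)
    (hf : StrictMonoOn f s) (ht : ∀ i, t i ∈ s) (ha : a ∈ s)
    (h : Tendsto (fun i => (f (t i) - f a) * (t i - a)) l (𝓝 0)) {b : ℝ} (hab : a < b) :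
    ∀ᶠ i in l, t i < b := by
  by_cases hb : b ∈ s
  · have hδ : 0 < (f b - f a) * (b - a) := mul_pos (sub_pos.2 (hf ha hb hab)) (sub_pos.2 hab)
    filter_upwards [h.eventually (gt_mem_nhds hδ)] with i hi
    by_contra! hbt
    have hfb : f b ≤ f (t i) := hf.monotoneOn hb (ht i) hbt
    have : (f b - f a) * (b - a) ≤ (f (t i) - f a) * (t i - a) :=
      mul_le_mul (by linarith) (by linarith) (sub_nonneg.2 hab.le) (by linarith [hf ha hb hab])
    linarith
  · exact Eventually.of_forall fun i => not_le.1 fun hbt => hb (hs.out ha (ht i) ⟨hab.le, hbt⟩)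

lemma StrictMonoOn.tendsto_of_tendsto_sub_mul_sub (hs : s.OrdConnected)
    (hf : StrictMonoOn f s) (ht : ∀ i, t i ∈ s) (ha : a ∈ s)
    (h : Tendsto (fun i => (f (t i) - f a) * (t i - a)) l (𝓝 0)) :
    Tendsto t l (𝓝 a) := by
  refine tendsto_order.2
    ⟨fun b hba => ?_, fun b => hf.eventually_lt_of_tendsto_sub_mul_sub hs ht ha h⟩
  -- Lower bounds are upper bounds for `x ↦ -f (-x)` on `-s`,
  -- which has the same `(f t - f a) * (t - a)`.
  have hf' : StrictMonoOn (fun x => -f (-x)) (-s) := fun x hx y hy hxy =>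
    neg_lt_neg (hf hy hx (neg_lt_neg hxy))
  have h' : Tendsto (fun i => (-f (-(-t i)) - -f (-(-a))) * (-t i - -a)) l (𝓝 0) := by
    refine h.congr fun i => ?_
    simp only [neg_neg]
    ring
  have hs' : (-s).OrdConnected := ⟨fun x hx y hy z hz =>
    hs.out hy hx ⟨neg_le_neg hz.2, neg_le_neg hz.1⟩⟩
  have := hf'.eventually_lt_of_tendsto_sub_mul_sub hs' (fun i => neg_mem_neg.2 (ht i))
    (neg_mem_neg.2 ha) h' (neg_lt_neg hba)
  simpa only [neg_lt_neg_iff] using this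

end StrictMonoOn

theorem stmt5 {X : Type*} [NormedAddCommGroup X] [NormedSpace ℝ X]
    (p : ℝ) (hp : 1 < p) (G' : X → X →L[ℝ] ℝ)
    (hmono : ∀ u v : X,
      (‖u‖ ^ (p - 1) - ‖v‖ ^ (p - 1)) * (‖u‖ - ‖v‖) ≤ (G' u - G' v) (u - v))
    (u : ℕ → X) (l : X)
    (hweak : ∀ f : X →L[ℝ] ℝ, Filter.Tendsto (fun n => f (u n)) Filter.atTop (nhds (f l)))
    (hG : Filter.Tendsto (fun n => G' (u n) (u n - l)) Filter.atTop (nhds 0)) :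
    Filter.Tendsto (fun n => ‖u n‖) Filter.atTop (nhds ‖l‖) := by
  have hpow : StrictMonoOn (fun x : ℝ => x ^ (p - 1)) (Ici 0) :=
    Real.strictMonoOn_rpow_Ici_of_exponent_pos (by linarith)
  refine hpow.tendsto_of_tendsto_sub_mul_sub ordConnected_Ici (fun n => norm_nonneg (u n))
    (norm_nonneg l) ?_
  have hGl : Tendsto (fun n => G' l (u n - l)) atTop (𝓝 0) := by
    simpa only [map_sub, sub_self] using (hweak (G' l)).sub_const (G' l l)
  refine squeeze_zero (fun n => ?_) (fun n => hmono (u n) l) ?_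
  · exact (monovaryOn_id_iff.2 hpow.monotoneOn).sub_mul_sub_nonneg (norm_nonneg l)
      (norm_nonneg (u n))
  · simpa only [sub_apply, sub_zero] using hG.sub hGl
end

section
/- Let E ⊆ ℝⁿ be measurable, 1 ≤ α, β < ∞, and h : E × ℝ → ℝ a Carathéodory function such that for every ε > 0 there exists a_ε ∈ L^β(E) with |h(x,s)| ≤ a_ε(x) + ε|s|^{α/β} for a.e. x ∈ E and all s ∈ ℝ. If (u_k) is bounded in L^α(E) and converges to u almost everywhere in E, then h(·,u_k(·)) converges to h(·,u(·)) strongly in L^β(E). -/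
/-!
The growth bound and the `L^α` bound on `u k` show that, for each `ε > 0`, on every set the
`L^β` norm of `h(·, u k ·)` exceeds that of the single function `a_ε ∈ L^β` by at most
`ε C^{α/β}`. Hence the family `h(·, u k ·)` is uniformly integrable and tight in `L^β`, and
Vitali's convergence theorem applies: `h(·, u k ·) → h(·, v ·)` a.e. by continuity of `h` in
its second variable, and `h(·, v ·) ∈ L^β` because Fatou puts `v` in `L^α`.
-/

open MeasureTheory NNReal Filter Set TopologicalSpace
open scoped ENNReal Topology

theorem AEMeasurable.caratheodory_comp {X Y Z : Type*} [MeasurableSpace X] {μ : Measure X}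
    [TopologicalSpace Y] [MetrizableSpace Y] [MeasurableSpace Y] [SecondCountableTopology Y]
    [OpensMeasurableSpace Y] [TopologicalSpace Z] [PseudoMetrizableSpace Z] [MeasurableSpace Z]
    [BorelSpace Z] [Zero Z] {h : X → Y → Z} (hmeas : ∀ y, Measurable fun x => h x y)
    (hcont : ∀ᵐ x ∂μ, Continuous (h x)) {w : X → Y} (hw : AEMeasurable w μ) :
    AEMeasurable (fun x => h x (w x)) μ := by
  obtain ⟨S, hSae, hS, hSc⟩ := hcont.exists_measurable_mem
  -- modify `h` on a null set so that it becomes continuous in `y` for every `x`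
  set h' : Y → X → Z := fun y => S.indicator fun x => h x y
  have hcont' : ∀ x, Continuous fun y => h' y x := by
    intro x
    by_cases hx : x ∈ S
    · simpa [h', indicator_of_mem hx] using hSc x hx
    · simp [h', indicator_of_notMem hx, continuous_const]
  have hh' : Measurable (Function.uncurry h') :=
    measurable_uncurry_of_continuous_of_measurable hcont' fun y => (hmeas y).indicator hS
  refine (hh'.comp_aemeasurable (hw.prodMk aemeasurable_id)).congr ?_
  filter_upwards [hSae] with x hx
  simp [h', indicator_of_mem hx]

theorem eLpNorm_norm_rpow_div_le {X E : Type*} [MeasurableSpace X] {μ : Measure X}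
    [NormedAddCommGroup E] {w : X → E} {α β : ℝ} (hα : 0 < α) (hβ : 0 < β) {C : ℝ≥0}
    (hw : eLpNorm w (ENNReal.ofReal α) μ ≤ C) :
    eLpNorm (fun x => ‖w x‖ ^ (α / β)) (ENNReal.ofReal β) μ ≤ ↑(C ^ (α / β)) := by
  rw [eLpNorm_norm_rpow w (div_pos hα hβ), ← ENNReal.ofReal_mul hβ.le,
    mul_div_cancel₀ α hβ.ne', ENNReal.coe_rpow_of_nonneg _ (div_pos hα hβ).le]
  gcongr

section ApproxDominated

variable {ι X E : Type*} [MeasurableSpace X] {μ : Measure X} {p : ℝ≥0∞} [NormedAddCommGroup E]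

theorem eLpNorm_indicator_le_of_norm_le_add (hp : 1 ≤ p) {f : X → E} {g F : X → ℝ} {ε : ℝ}
    (hε : 0 ≤ ε) (hg : AEStronglyMeasurable g μ) (hF : AEStronglyMeasurable F μ)
    (hfg : ∀ᵐ x ∂μ, ‖f x‖ ≤ g x + ε * F x) {s : Set X} (hs : MeasurableSet s) :
    eLpNorm (s.indicator f) p μ ≤
      eLpNorm (s.indicator g) p μ + ENNReal.ofReal ε * eLpNorm F p μ := by
  calc eLpNorm (s.indicator f) p μ
      ≤ eLpNorm (s.indicator g + ε • s.indicator F) p μ := by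
        refine eLpNorm_mono_ae_real ?_
        filter_upwards [hfg] with x hx
        by_cases hxs : x ∈ s <;> simp [hxs, hx]
    _ ≤ eLpNorm (s.indicator g) p μ + eLpNorm (ε • s.indicator F) p μ :=
        eLpNorm_add_le (hg.indicator hs) ((hF.indicator hs).const_smul ε) hp
    _ ≤ eLpNorm (s.indicator g) p μ + ENNReal.ofReal ε * eLpNorm F p μ := by
        rw [eLpNorm_const_smul, Real.enorm_of_nonneg hε]
        gcongr
        exact eLpNorm_indicator_le F

def IsApproxDominated (f : ι → X → E) (F : ι → X → ℝ) (p : ℝ≥0∞) (μ : Measure X) : Prop :=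
  ∀ ε > (0 : ℝ), ∃ g : X → ℝ, MemLp g p μ ∧ ∀ i, ∀ᵐ x ∂μ, ‖f i x‖ ≤ g x + ε * F i x

variable {f : ι → X → E} {F : ι → X → ℝ} {C : ℝ≥0}

theorem IsApproxDominated.exists_memLp_eLpNorm_indicator_le_add (hdom : IsApproxDominated f F p μ)
    (hp : 1 ≤ p) (hF : ∀ i, AEStronglyMeasurable (F i) μ) (hFC : ∀ i, eLpNorm (F i) p μ ≤ C)
    {η : ℝ} (hη : 0 < η) :
    ∃ g : X → ℝ, MemLp g p μ ∧ ∀ i s, MeasurableSet s →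
      eLpNorm (s.indicator (f i)) p μ ≤ eLpNorm (s.indicator g) p μ + ENNReal.ofReal η := by
  set ε := η / (C + 1)
  have hε : 0 < ε := by positivity
  obtain ⟨g, hg, hfg⟩ := hdom ε hε
  refine ⟨g, hg, fun i s hs => ?_⟩
  have hεC : ENNReal.ofReal ε * C ≤ ENNReal.ofReal η := by
    rw [← ENNReal.ofReal_coe_nnreal, ← ENNReal.ofReal_mul hε.le]
    refine ENNReal.ofReal_le_ofReal ?_
    rw [div_mul_eq_mul_div, div_le_iff₀ (by positivity)]
    nlinarith
  calc eLpNorm (s.indicator (f i)) p μ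
      ≤ eLpNorm (s.indicator g) p μ + ENNReal.ofReal ε * eLpNorm (F i) p μ :=
        eLpNorm_indicator_le_of_norm_le_add hp hε.le hg.1 (hF i) (hfg i) hs
    _ ≤ eLpNorm (s.indicator g) p μ + ENNReal.ofReal η := by grw [hFC i, hεC]

theorem IsApproxDominated.unifIntegrable (hdom : IsApproxDominated f F p μ) (hp : 1 ≤ p)
    (hp' : p ≠ ∞) (hF : ∀ i, AEStronglyMeasurable (F i) μ) (hFC : ∀ i, eLpNorm (F i) p μ ≤ C) :
    UnifIntegrable f p μ := by
  intro η hη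
  obtain ⟨g, hg, hfg⟩ := hdom.exists_memLp_eLpNorm_indicator_le_add hp hF hFC (half_pos hη)
  obtain ⟨δ, hδ, hgδ⟩ := hg.eLpNorm_indicator_le hp hp' (half_pos hη)
  refine ⟨δ, hδ, fun i s hs hμs => (hfg i s hs).trans ?_⟩
  calc eLpNorm (s.indicator g) p μ + ENNReal.ofReal (η / 2)
      ≤ ENNReal.ofReal (η / 2) + ENNReal.ofReal (η / 2) := by grw [hgδ s hs hμs]
    _ = ENNReal.ofReal η := by
        rw [← ENNReal.ofReal_add (by positivity) (by positivity), add_halves]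

theorem IsApproxDominated.unifTight (hdom : IsApproxDominated f F p μ) (hp : 1 ≤ p)
    (hp' : p ≠ ∞) (hF : ∀ i, AEStronglyMeasurable (F i) μ) (hFC : ∀ i, eLpNorm (F i) p μ ≤ C) :
    UnifTight f p μ := by
  intro η hη
  have hη₂ : 0 < (η : ℝ) / 2 := half_pos (NNReal.coe_pos.2 hη)
  obtain ⟨g, hg, hfg⟩ := hdom.exists_memLp_eLpNorm_indicator_le_add hp hF hFC hη₂
  obtain ⟨s, hs, hμs, hgs⟩ :=
    hg.exists_eLpNorm_indicator_compl_lt hp' (ENNReal.ofReal_pos.2 hη₂).ne'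
  refine ⟨s, hμs.ne, fun i => (hfg i sᶜ hs.compl).trans ?_⟩
  calc eLpNorm (sᶜ.indicator g) p μ + ENNReal.ofReal (η / 2)
      ≤ ENNReal.ofReal (η / 2) + ENNReal.ofReal (η / 2) := by grw [hgs]
    _ = η := by
        rw [← ENNReal.ofReal_add (by positivity) (by positivity), add_halves,
          ENNReal.ofReal_coe_nnreal]

theorem IsApproxDominated.tendsto_eLpNorm_sub {f : ℕ → X → E} {F : ℕ → X → ℝ} {f₀ : X → E}
    (hdom : IsApproxDominated f F p μ) (hp : 1 ≤ p) (hp' : p ≠ ∞)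
    (hf : ∀ k, AEStronglyMeasurable (f k) μ) (hf₀ : MemLp f₀ p μ)
    (hF : ∀ k, AEStronglyMeasurable (F k) μ) (hFC : ∀ k, eLpNorm (F k) p μ ≤ C)
    (hlim : ∀ᵐ x ∂μ, Tendsto (fun k => f k x) atTop (𝓝 (f₀ x))) :
    Tendsto (fun k => eLpNorm (f k - f₀) p μ) atTop (𝓝 0) :=
  tendsto_Lp_of_tendsto_ae hp hp' hf hf₀ (hdom.unifIntegrable hp hp' hF hFC)
    (hdom.unifTight hp hp' hF hFC) hlim

end ApproxDominated

theorem stmt6_general {n : ℕ} (E : Set (Fin n → ℝ))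
    (α β : ℝ) (hα : 1 ≤ α) (hβ : 1 ≤ β)
    (h : (Fin n → ℝ) → ℝ → ℝ)
    (hmeas : ∀ s : ℝ, Measurable fun x => h x s)
    (hcont : ∀ᵐ x ∂(volume.restrict E), Continuous fun s => h x s)
    (hgrowth : ∀ ε > (0:ℝ), ∃ a : (Fin n → ℝ) → ℝ,
      MemLp a (ENNReal.ofReal β) (volume.restrict E) ∧
      ∀ᵐ x ∂(volume.restrict E), ∀ s : ℝ, |h x s| ≤ a x + ε * |s| ^ (α / β))
    (u : ℕ → (Fin n → ℝ) → ℝ) (v : (Fin n → ℝ) → ℝ)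
    (humeas : ∀ k, AEMeasurable (u k) (volume.restrict E))
    (hbdd : ∃ C : ℝ≥0, ∀ k, eLpNorm (u k) (ENNReal.ofReal α) (volume.restrict E) ≤ C)
    (hae : ∀ᵐ x ∂(volume.restrict E),
      Filter.Tendsto (fun k => u k x) Filter.atTop (nhds (v x))) :
    Filter.Tendsto
      (fun k => eLpNorm (fun x => h x (u k x) - h x (v x)) (ENNReal.ofReal β)
        (volume.restrict E))
      Filter.atTop (nhds 0) := by
  set μ := volume.restrict E
  have hp : 1 ≤ ENNReal.ofReal β := ENNReal.one_le_ofReal.2 hβ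
  have hα₀ : 0 < α := by linarith
  have hβ₀ : 0 < β := by linarith
  obtain ⟨C, hC⟩ := hbdd
  have hcomp : ∀ w, AEMeasurable w μ → AEStronglyMeasurable (fun x => h x (w x)) μ :=
    fun w hw => (hw.caratheodory_comp hmeas hcont).aestronglyMeasurable
  have hv : AEMeasurable v μ := aemeasurable_of_tendsto_metrizable_ae atTop humeas hae
  have hvC : eLpNorm v (ENNReal.ofReal α) μ ≤ C :=
    (Lp.eLpNorm_lim_le_liminf_eLpNorm (fun k => (humeas k).aestronglyMeasurable) v hae).trans
      (liminf_le_of_frequently_le' (Frequently.of_forall hC))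
  have hhv : MemLp (fun x => h x (v x)) (ENNReal.ofReal β) μ := by
    obtain ⟨a, ha, hbound⟩ := hgrowth 1 one_pos
    have hvF : MemLp (fun x => ‖v x‖ ^ (α / β)) (ENNReal.ofReal β) μ :=
      ⟨(hv.norm.pow_const _).aestronglyMeasurable,
        (eLpNorm_norm_rpow_div_le hα₀ hβ₀ hvC).trans_lt ENNReal.coe_lt_top⟩
    refine (ha.add (hvF.const_mul 1)).of_le (hcomp v hv) ?_
    filter_upwards [hbound] with x hx
    exact (hx (v x)).trans (le_abs_self _)
  have hdom : IsApproxDominated (fun k x => h x (u k x)) (fun k x => ‖u k x‖ ^ (α / β))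
      (ENNReal.ofReal β) μ := by
    intro ε hε
    obtain ⟨a, ha, hbound⟩ := hgrowth ε hε
    exact ⟨a, ha, fun k => by filter_upwards [hbound] with x hx using hx (u k x)⟩
  exact hdom.tendsto_eLpNorm_sub hp ENNReal.ofReal_ne_top (fun k => hcomp _ (humeas k)) hhv
    (fun k => ((humeas k).norm.pow_const _).aestronglyMeasurable)
    (fun k => eLpNorm_norm_rpow_div_le hα₀ hβ₀ (hC k))
    (by filter_upwards [hcont, hae] with x hcx hx using (hcx.tendsto _).comp hx)

theorem stmt6 {n : ℕ} (E : Set (Fin n → ℝ)) (hE : MeasurableSet E)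
    (α β : ℝ) (hα : 1 ≤ α) (hβ : 1 ≤ β)
    (h : (Fin n → ℝ) → ℝ → ℝ)
    (hmeas : ∀ s : ℝ, Measurable fun x => h x s)
    (hcont : ∀ᵐ x ∂(volume.restrict E), Continuous fun s => h x s)
    (hgrowth : ∀ ε > (0:ℝ), ∃ a : (Fin n → ℝ) → ℝ,
      MemLp a (ENNReal.ofReal β) (volume.restrict E) ∧
      ∀ᵐ x ∂(volume.restrict E), ∀ s : ℝ, |h x s| ≤ a x + ε * |s| ^ (α / β))
    (u : ℕ → (Fin n → ℝ) → ℝ) (v : (Fin n → ℝ) → ℝ)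
    (humeas : ∀ k, AEMeasurable (u k) (volume.restrict E))
    (hbdd : ∃ C : ℝ≥0, ∀ k, eLpNorm (u k) (ENNReal.ofReal α) (volume.restrict E) ≤ C)
    (hae : ∀ᵐ x ∂(volume.restrict E),
      Filter.Tendsto (fun k => u k x) Filter.atTop (nhds (v x))) :
    Filter.Tendsto
      (fun k => eLpNorm (fun x => h x (u k x) - h x (v x)) (ENNReal.ofReal β)
        (volume.restrict E))
      Filter.atTop (nhds 0) :=
  stmt6_general E α β hα hβ h hmeas hcont hgrowth u v humeas hbdd hae
end
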